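/- arXiv:1810.11949 — 2 statements merged into one kernel-verified Lean document; each statement's English description precedes it below -/
import Mathlib

section
/- Let M ∈ SL(2,ℤ) be hyperbolic (|Tr M| > 2) with larger eigenvalue modulus e^λ, λ > 0. Then there exists a constant C > 0 depending only on M such that for all integers N ≥ 2, the period P(N) of M modulo N satisfies P(N) ≥ (2/λ) log N − C. -/
/-!
If `M ^ P ≡ 1 (mod N)` then `N ^ 2` divides `2 - Tr (M ^ P) = det (M ^ P - 1)`. The eigenvalues
of `M` are `±e^{±λ}`, so `|Tr (M ^ P)| = 2 cosh (λ P)`. This exceeds `2`, so `2 - Tr (M ^ P)` is a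
nonzero multiple of `N ^ 2`, while `2 cosh (λ P) ≤ e^{λ P} + 1` bounds it by `4 e^{λ P}`. Hence
`N ^ 2 ≤ 4 e^{λ P}`, which gives the bound with `C = log 4 / λ`.
-/

open Real

namespace Matrix

variable {R : Type*} [CommRing R]

theorem fin_two_sq_eq_trace_smul_sub_det_smul (A : Matrix (Fin 2) (Fin 2) R) :
    A ^ 2 = A.trace • A - A.det • (1 : Matrix (Fin 2) (Fin 2) R) := by
  ext i j
  fin_cases i <;> fin_cases j <;>
    simp [sq, mul_apply, trace_fin_two, det_fin_two] <;> ring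

theorem trace_pow_fin_two_eq_add_pow (A : Matrix (Fin 2) (Fin 2) R) {μ ν : R}
    (hsum : μ + ν = A.trace) (hprod : μ * ν = A.det) (k : ℕ) :
    (A ^ k).trace = μ ^ k + ν ^ k := by
  induction k using Nat.twoStepInduction with
  | zero => norm_num [trace_one]
  | one => simpa using hsum.symm
  | more k ih₀ ih₁ =>
    have hpow : A ^ (k + 2) = A.trace • A ^ (k + 1) - A.det • A ^ k := by
      rw [pow_add, fin_two_sq_eq_trace_smul_sub_det_smul, mul_sub, mul_smul_comm, mul_smul_comm,
        mul_one, ← pow_succ]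
    rw [hpow, trace_sub, trace_smul, trace_smul, ih₀, ih₁, ← hsum, ← hprod, smul_eq_mul,
      smul_eq_mul]
    ring

theorem sq_dvd_two_sub_trace {A : Matrix (Fin 2) (Fin 2) R} (hdet : A.det = 1) {n : R}
    (h : ∀ i j, n ∣ A i j - (1 : Matrix (Fin 2) (Fin 2) R) i j) : n ^ 2 ∣ 2 - A.trace := by
  have h00 : n ∣ A 0 0 - 1 := by simpa using h 0 0
  have h11 : n ∣ A 1 1 - 1 := by simpa using h 1 1
  have h01 : n ∣ A 0 1 := by simpa using h 0 1
  have h10 : n ∣ A 1 0 := by simpa using h 1 0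
  have hdet' : (A 0 0 - 1) * (A 1 1 - 1) - A 0 1 * A 1 0 = 2 - A.trace := by
    rw [det_fin_two] at hdet
    rw [trace_fin_two]
    linear_combination hdet
  rw [← hdet', sq]
  exact dvd_sub (mul_dvd_mul h00 h11) (mul_dvd_mul h01 h10)

end Matrix

theorem abs_trace_pow_eq_two_mul_cosh {M : Matrix (Fin 2) (Fin 2) ℤ} (hdet : M.det = 1) {l : ℝ}
    (hltr : exp l + exp (-l) = |(M.trace : ℝ)|) (k : ℕ) :
    |((M ^ k).trace : ℝ)| = 2 * cosh (l * k) := by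
  obtain ⟨ε, hε, hεt⟩ : ∃ ε : ℝ, |ε| = 1 ∧ ε * |(M.trace : ℝ)| = M.trace := by
    rcases abs_choice (M.trace : ℝ) with h | h
    · exact ⟨1, abs_one, by rw [h, one_mul]⟩
    · exact ⟨-1, by rw [abs_neg, abs_one], by rw [h, neg_one_mul, neg_neg]⟩
  have hε2 : ε * ε = 1 := by rw [← sq, ← sq_abs, hε, one_pow]
  let f := Int.castRingHom ℝ
  set A := f.mapMatrix M
  have hsum : ε * exp l + ε * exp (-l) = A.trace := by
    rw [← mul_add, hltr, hεt]
    exact AddMonoidHom.map_trace f M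
  have hprod : ε * exp l * (ε * exp (-l)) = A.det := by
    rw [← f.map_det, hdet, map_one, mul_mul_mul_comm, hε2, ← exp_add, add_neg_cancel,
      exp_zero, one_mul]
  have htrace : ((M ^ k).trace : ℝ) = (A ^ k).trace := by
    rw [← map_pow]
    exact AddMonoidHom.map_trace f (M ^ k)
  rw [htrace, Matrix.trace_pow_fin_two_eq_add_pow A hsum hprod, mul_pow, mul_pow, ← mul_add,
    abs_mul, abs_pow, hε, one_pow, one_mul, ← exp_nat_mul, ← exp_nat_mul, cosh_eq,
    abs_of_pos (by positivity)]
  ring_nf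

theorem sq_le_four_mul_exp_of_sq_dvd_two_sub {n T : ℤ} {x : ℝ} (hx : 0 < x)
    (hT : |(T : ℝ)| = 2 * cosh x) (hdvd : n ^ 2 ∣ 2 - T) : (n : ℝ) ^ 2 ≤ 4 * exp x := by
  have hcosh : 1 < cosh x := one_lt_cosh.mpr hx.ne'
  have hne : 2 - T ≠ 0 := by
    intro h
    rw [show T = 2 by omega] at hT
    norm_num at hT
    linarith
  have hle : (n : ℝ) ^ 2 ≤ |((2 - T : ℤ) : ℝ)| := by
    exact_mod_cast Int.le_of_dvd (abs_pos.mpr hne) ((dvd_abs _ _).mpr hdvd)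
  have hexp : exp (-x) ≤ exp x := exp_le_exp.mpr (by linarith)
  calc (n : ℝ) ^ 2 ≤ |((2 - T : ℤ) : ℝ)| := hle
    _ ≤ 2 + |(T : ℝ)| := by push_cast; exact (abs_sub _ _).trans_eq (by norm_num)
    _ ≤ 4 * exp x := by
      rw [hT, cosh_eq]
      linarith [add_one_le_exp x]

theorem stmt_3_general (M : Matrix (Fin 2) (Fin 2) ℤ) (hdet : M.det = 1)
    (l : ℝ) (hl : 0 < l) (hltr : Real.exp l + Real.exp (-l) = |(M.trace : ℝ)|) :
    ∃ C : ℝ, 0 < C ∧ ∀ N : ℕ, 2 ≤ N → ∀ P : ℕ, 0 < P →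
      (∀ i j, (N : ℤ) ∣ ((M ^ P) i j - (1 : Matrix (Fin 2) (Fin 2) ℤ) i j)) →
      (∀ k : ℕ, 0 < k →
        (∀ i j, (N : ℤ) ∣ ((M ^ k) i j - (1 : Matrix (Fin 2) (Fin 2) ℤ) i j)) → P ≤ k) →
      (P : ℝ) ≥ 2 / l * Real.log N - C := by
  refine ⟨log 4 / l, div_pos (log_pos (by norm_num)) hl, fun N hN P hP hdvd _ => ?_⟩
  have hdetP : (M ^ P).det = 1 := by rw [Matrix.det_pow, hdet, one_pow]
  have hbound : (N : ℝ) ^ 2 ≤ 4 * exp (l * P) := by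
    exact_mod_cast sq_le_four_mul_exp_of_sq_dvd_two_sub (by positivity)
      (abs_trace_pow_eq_two_mul_cosh hdet hltr P) (Matrix.sq_dvd_two_sub_trace hdetP hdvd)
  have hlog : 2 * log N ≤ log 4 + l * P := by
    have h := log_le_log (by positivity) hbound
    rwa [log_pow, log_mul (by norm_num) (exp_ne_zero _), log_exp, Nat.cast_ofNat] at h
  rw [ge_iff_le, div_mul_eq_mul_div, ← sub_div, div_le_iff₀ hl]
  linarith

/-- For a hyperbolic `M ∈ SL(2,ℤ)` with larger eigenvalue modulus `e^λ`, `λ > 0`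
(so that `e^λ + e^{-λ} = |Tr M|`), there is `C > 0` depending only on `M` such that
for all `N ≥ 2` the period `P(N)` of `M` mod `N` satisfies `P(N) ≥ (2/λ) log N − C`. -/
theorem stmt_3 (M : Matrix (Fin 2) (Fin 2) ℤ) (hdet : M.det = 1) (htr : |M.trace| > 2)
    (l : ℝ) (hl : 0 < l) (hltr : Real.exp l + Real.exp (-l) = |(M.trace : ℝ)|) :
    ∃ C : ℝ, 0 < C ∧ ∀ N : ℕ, 2 ≤ N → ∀ P : ℕ, 0 < P →
      (∀ i j, (N : ℤ) ∣ ((M ^ P) i j - (1 : Matrix (Fin 2) (Fin 2) ℤ) i j)) →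
      (∀ k : ℕ, 0 < k →
        (∀ i j, (N : ℤ) ∣ ((M ^ k) i j - (1 : Matrix (Fin 2) (Fin 2) ℤ) i j)) → P ≤ k) →
      (P : ℝ) ≥ 2 / l * Real.log N - C :=
  stmt_3_general M hdet l hl hltr
end

section
/- (Abstract variance bound via ergodic averaging) Let H be an N-dimensional complex inner product space with orthonormal basis {φ_j}, let U be a unitary operator on H with U φ_j = e^{iθ_j} φ_j, and let A be an operator on H. Suppose T ≥ 1 is an integer such that Tr((U^t A U^{-t})* (U^s A U^{-s})) = N if t = s and = 0 otherwise, for 0 ≤ t,s ≤ T−1. Then (1/N) Σ_{j=1}^N |⟨A φ_j, φ_j⟩|² ≤ 1/T. -/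
/-!
Each `φ j` is an eigenvector of `U`, so the diagonal entry `⟪A φ_j, φ_j⟫` is unchanged when `A`
is replaced by `U^t A U^{-t}`. Hence the ergodic sum `B = ∑_{t<T} U^t A U^{-t}` has diagonal
entries `T ⟪A φ_j, φ_j⟫`. By Cauchy–Schwarz the sum of the squared diagonal entries of `B` is at most
`∑_j ‖B φ_j‖² = Tr(B* B)`, and the orthogonality hypothesis evaluates this trace to `T N`.
Thus `T² ∑_j |⟪A φ_j, φ_j⟫|² ≤ T N`.
-/

open scoped InnerProductSpace
open Finset

namespace LinearIsometryEquiv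

variable {𝕜 E : Type*} [RCLike 𝕜] [NormedAddCommGroup E] [InnerProductSpace 𝕜 E]

lemma inner_conj_apply_self_of_apply_eq_smul (U : E ≃ₗᵢ[𝕜] E) (B : E →ₗ[𝕜] E) {v : E} {c : 𝕜}
    (hv : U v = c • v) : ⟪U (B (U.symm v)), v⟫_𝕜 = ⟪B v, v⟫_𝕜 := by
  set w := U.symm v
  have hvw : v = c • w := by rw [← U.symm.map_smul, ← hv, U.symm_apply_apply]
  have hUw : U w = v := U.apply_symm_apply v
  rcases eq_or_ne w 0 with hw | hw
  · simp [hvw, hw]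
  have hc : ‖c‖ = 1 := by
    have := congrArg norm hvw
    rw [← hUw, U.norm_map, norm_smul] at this
    exact (mul_eq_right₀ (norm_ne_zero_iff.mpr hw)).mp this.symm
  calc ⟪U (B w), v⟫_𝕜 = ⟪U (B w), U w⟫_𝕜 := by rw [hUw]
    _ = ⟪B w, w⟫_𝕜 := U.inner_map_map _ _
    _ = ⟪B (c • w), c • w⟫_𝕜 := by
      rw [B.map_smul, inner_smul_left, inner_smul_right, ← mul_assoc, RCLike.conj_mul, hc]
      simp
    _ = ⟪B v, v⟫_𝕜 := by rw [← hvw]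

lemma inner_conj_pow_apply_self_of_apply_eq_smul (U : E ≃ₗᵢ[𝕜] E) (B : E →ₗ[𝕜] E) {v : E}
    {c : 𝕜} (hv : U v = c • v) (t : ℕ) :
    ⟪((U.toLinearEquiv.toLinearMap ^ t) ∘ₗ B ∘ₗ (U.symm.toLinearEquiv.toLinearMap ^ t)) v, v⟫_𝕜
      = ⟪B v, v⟫_𝕜 := by
  induction t with
  | zero => simp
  | succ t ih =>
    calc _ = ⟪U (((U.toLinearEquiv.toLinearMap ^ t) ∘ₗ B ∘ₗ
            (U.symm.toLinearEquiv.toLinearMap ^ t)) (U.symm v)), v⟫_𝕜 := by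
          rw [pow_succ', pow_succ]; rfl
      _ = _ := U.inner_conj_apply_self_of_apply_eq_smul _ hv
      _ = _ := ih

end LinearIsometryEquiv

namespace LinearMap

variable {𝕜 E ι : Type*} [RCLike 𝕜] [NormedAddCommGroup E] [InnerProductSpace 𝕜 E]
  [FiniteDimensional 𝕜 E]

lemma re_trace_adjoint_comp_self_eq_sum [Fintype ι] (f : E →ₗ[𝕜] E)
    (b : OrthonormalBasis ι 𝕜 E) :
    RCLike.re ((adjoint f ∘ₗ f).trace 𝕜 E) = ∑ i, ‖f (b i)‖ ^ 2 := by
  simp [trace_eq_sum_inner _ b, adjoint_inner_right]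

lemma sum_norm_inner_apply_self_sq_le_re_trace [Fintype ι] (f : E →ₗ[𝕜] E)
    (b : OrthonormalBasis ι 𝕜 E) :
    ∑ i, ‖⟪f (b i), b i⟫_𝕜‖ ^ 2 ≤ RCLike.re ((adjoint f ∘ₗ f).trace 𝕜 E) := by
  rw [re_trace_adjoint_comp_self_eq_sum f b]
  gcongr with i
  simpa [b.orthonormal.1 i] using norm_inner_le_norm (𝕜 := 𝕜) (f (b i)) (b i)

lemma trace_adjoint_sum_comp_sum (s : Finset ι) (C : ι → E →ₗ[𝕜] E) :
    (adjoint (∑ t ∈ s, C t) ∘ₗ ∑ u ∈ s, C u).trace 𝕜 E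
      = ∑ t ∈ s, ∑ u ∈ s, (adjoint (C t) ∘ₗ C u).trace 𝕜 E := by
  simp [map_sum, ← Module.End.mul_eq_comp, sum_mul_sum]

end LinearMap

theorem stmt_7_general {H : Type*} [NormedAddCommGroup H] [InnerProductSpace ℂ H]
    [FiniteDimensional ℂ H]
    (N T : ℕ) (hT : 1 ≤ T)
    (φ : OrthonormalBasis (Fin N) ℂ H)
    (U : H ≃ₗᵢ[ℂ] H) (θ : Fin N → ℝ)
    (hU : ∀ j, U (φ j) = Complex.exp (θ j * Complex.I) • φ j)
    (A : H →ₗ[ℂ] H)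
    (htr : ∀ t s : ℕ, t < T → s < T →
      LinearMap.trace ℂ H
        ((LinearMap.adjoint
            ((U.toLinearEquiv.toLinearMap ^ t : H →ₗ[ℂ] H) ∘ₗ A ∘ₗ
              (U.symm.toLinearEquiv.toLinearMap ^ t : H →ₗ[ℂ] H)) : H →ₗ[ℂ] H) ∘ₗ
          ((U.toLinearEquiv.toLinearMap ^ s : H →ₗ[ℂ] H) ∘ₗ A ∘ₗ
            (U.symm.toLinearEquiv.toLinearMap ^ s : H →ₗ[ℂ] H)))
        = if t = s then (N : ℂ) else 0) :
    (1 / N : ℝ) * ∑ j, ‖(inner ℂ (A (φ j)) (φ j) : ℂ)‖ ^ 2 ≤ 1 / T := by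
  set C : ℕ → H →ₗ[ℂ] H := fun t =>
    (U.toLinearEquiv.toLinearMap ^ t) ∘ₗ A ∘ₗ (U.symm.toLinearEquiv.toLinearMap ^ t)
  set B : H →ₗ[ℂ] H := ∑ t ∈ range T, C t
  have hdiag (j : Fin N) : ⟪B (φ j), φ j⟫_ℂ = T * ⟪A (φ j), φ j⟫_ℂ := by
    rw [LinearMap.sum_apply, sum_inner]
    simp only [C, U.inner_conj_pow_apply_self_of_apply_eq_smul _ (hU j), sum_const, card_range,
      nsmul_eq_mul]
  have htrace : (LinearMap.adjoint B ∘ₗ B).trace ℂ H = T * N := by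
    rw [LinearMap.trace_adjoint_sum_comp_sum]
    calc ∑ t ∈ range T, ∑ s ∈ range T, (LinearMap.adjoint (C t) ∘ₗ C s).trace ℂ H
        = ∑ t ∈ range T, ∑ s ∈ range T, if t = s then (N : ℂ) else 0 :=
          sum_congr rfl fun t ht => sum_congr rfl fun s hs =>
            htr t s (mem_range.1 ht) (mem_range.1 hs)
      _ = T * N := by simp +contextual
  have hbound := B.sum_norm_inner_apply_self_sq_le_re_trace φ
  simp only [hdiag, htrace, norm_mul, Complex.norm_natCast, mul_pow, ← mul_sum, ← Nat.cast_mul,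
    RCLike.natCast_re] at hbound
  have hT0 : (0 : ℝ) < T := by exact_mod_cast hT
  have hsum : ∑ j, ‖⟪A (φ j), φ j⟫_ℂ‖ ^ 2 ≤ N / T := by
    rw [le_div_iff₀ hT0]
    push_cast at hbound
    nlinarith
  calc 1 / N * ∑ j, ‖⟪A (φ j), φ j⟫_ℂ‖ ^ 2 ≤ 1 / N * (N / T) := by gcongr
    _ = N / N / T := by ring
    _ ≤ 1 / T := by gcongr; exact div_self_le_one _

/-- Abstract variance bound via ergodic averaging: if `{φ_j}` is an orthonormal eigenbasis of
a unitary `U` on an `N`-dimensional Hilbert space, `A` an operator, and `T ≥ 1` is such that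
the conjugated operators `U^t A U^{-t}`, `0 ≤ t ≤ T−1`, satisfy the trace orthogonality
`Tr((U^t A U^{-t})* (U^s A U^{-s})) = N δ_{ts}`, then `(1/N) Σ_j |⟨Aφ_j,φ_j⟩|² ≤ 1/T`. -/
theorem stmt_7 {H : Type*} [NormedAddCommGroup H] [InnerProductSpace ℂ H]
    [FiniteDimensional ℂ H]
    (N T : ℕ) (hN : 0 < N) (hT : 1 ≤ T)
    (φ : OrthonormalBasis (Fin N) ℂ H)
    (U : H ≃ₗᵢ[ℂ] H) (θ : Fin N → ℝ)
    (hU : ∀ j, U (φ j) = Complex.exp (θ j * Complex.I) • φ j)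
    (A : H →ₗ[ℂ] H)
    (htr : ∀ t s : ℕ, t < T → s < T →
      LinearMap.trace ℂ H
        ((LinearMap.adjoint
            ((U.toLinearEquiv.toLinearMap ^ t : H →ₗ[ℂ] H) ∘ₗ A ∘ₗ
              (U.symm.toLinearEquiv.toLinearMap ^ t : H →ₗ[ℂ] H)) : H →ₗ[ℂ] H) ∘ₗ
          ((U.toLinearEquiv.toLinearMap ^ s : H →ₗ[ℂ] H) ∘ₗ A ∘ₗ
            (U.symm.toLinearEquiv.toLinearMap ^ s : H →ₗ[ℂ] H)))
        = if t = s then (N : ℂ) else 0) :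
    (1 / N : ℝ) * ∑ j, ‖(inner ℂ (A (φ j)) (φ j) : ℂ)‖ ^ 2 ≤ 1 / T :=
  stmt_7_general N T hT φ U θ hU A htr
end
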